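/- Let (v_1,…,v_n) be matroidal valuations, i ∈ N an agent, and X ⊆ Y ⊆ M. Let P = (v_1,…,v_i|X,…,v_n) and P' = (v_1,…,v_i|Y,…,v_n) be the profiles in which agent i's valuation is restricted to X and to Y respectively. Then min_{B∈cLD(P)} |B_i| ≤ min_{B'∈cLD(P')} |B'_i|. -/

import Mathlib

open Finset

/-- A matroidal valuation on the goods `Fin m`: a monotone submodular function
with `v ∅ = 0` whose marginal gains lie in `{0,1}`. -/
structure Matroidal (m : ℕ) where
  v : Finset (Fin m) → ℕ
  v_empty : v ∅ = 0
  mono : ∀ ⦃X Y : Finset (Fin m)⦄, X ⊆ Y → v X ≤ v Y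
  submodular : ∀ X Y : Finset (Fin m), v (X ∪ Y) + v (X ∩ Y) ≤ v X + v Y
  marginal : ∀ (X : Finset (Fin m)) (e : Fin m), v (insert e X) ≤ v X + 1

/-- An allocation: the bundles are pairwise disjoint. -/
def IsAllocation {n m : ℕ} (A : Fin n → Finset (Fin m)) : Prop :=
  ∀ i j : Fin n, i ≠ j → Disjoint (A i) (A j)

/-- An allocation is clean (for matroidal valuations) iff each bundle is independent. -/
def Clean {n m : ℕ} (P : Fin n → Matroidal m) (A : Fin n → Finset (Fin m)) : Prop :=
  ∀ i, (P i).v (A i) = (A i).card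

/-- A utilitarian optimal allocation. -/
def UtilOpt {n m : ℕ} (P : Fin n → Matroidal m) (A : Fin n → Finset (Fin m)) : Prop :=
  IsAllocation A ∧ ∀ B : Fin n → Finset (Fin m), IsAllocation B →
    ∑ i, (P i).v (B i) ≤ ∑ i, (P i).v (A i)

/-- The sum of the `k` smallest entries of `u`, as the minimum of all `k`-subset sums. -/
noncomputable def kSmallestSum {n : ℕ} (u : Fin n → ℕ) (k : ℕ) : ℕ :=
  sInf {s | ∃ S : Finset (Fin n), S.card = k ∧ s = ∑ i ∈ S, u i}

/-- `A` is Lorenz dominating: it is an allocation that Lorenz dominates every allocation. -/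
def LorenzDominating {n m : ℕ} (P : Fin n → Matroidal m) (A : Fin n → Finset (Fin m)) : Prop :=
  IsAllocation A ∧ ∀ B : Fin n → Finset (Fin m), IsAllocation B →
    ∀ k ≤ n, kSmallestSum (fun i => (P i).v (B i)) k ≤ kSmallestSum (fun i => (P i).v (A i)) k

/-- The set of clean Lorenz dominating allocations. -/
def cLD {n m : ℕ} (P : Fin n → Matroidal m) : Set (Fin n → Finset (Fin m)) :=
  {A | Clean P A ∧ LorenzDominating P A}

/-- `min_{B ∈ cLD(P)} |B_i|`. -/
noncomputable def minSize {n m : ℕ} (P : Fin n → Matroidal m) (i : Fin n) : ℕ :=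
  sInf {c | ∃ A ∈ cLD P, c = (A i).card}

/-- `max_{B ∈ cLD(P)} |B_i|`. -/
noncomputable def maxSize {n m : ℕ} (P : Fin n → Matroidal m) (i : Fin n) : ℕ :=
  sSup {c | ∃ A ∈ cLD P, c = (A i).card}

/-- The SE subsidy for agent `i` under allocation `A` and profile `P`. -/
noncomputable def sePay {n m : ℕ} (P : Fin n → Matroidal m) (A : Fin n → Finset (Fin m))
    (i : Fin n) : ℕ :=
  if (A i).card = minSize P i ∧ (A i).card < Finset.univ.sup (fun j => (A j).card) then 1 else 0

/-- Restriction of a matroidal valuation to a set `X`. -/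
def Matroidal.restrict {m : ℕ} (w : Matroidal m) (X : Finset (Fin m)) : Matroidal m where
  v Y := w.v (X ∩ Y)
  v_empty := by simp [w.v_empty]
  mono := fun {Y Z} h => w.mono (Finset.inter_subset_inter le_rfl h)
  submodular := fun Y Z => by
    have h := w.submodular (X ∩ Y) (X ∩ Z)
    have h1 : X ∩ (Y ∪ Z) = (X ∩ Y) ∪ (X ∩ Z) := Finset.inter_union_distrib_left X Y Z
    have h2 : X ∩ (Y ∩ Z) = (X ∩ Y) ∩ (X ∩ Z) := by
      ext a; simp [Finset.mem_inter]; tauto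
    simpa [h1, h2] using h
  marginal := fun Y e => by
    by_cases he : e ∈ X
    · have h1 : X ∩ insert e Y = insert e (X ∩ Y) := by
        ext a
        simp only [Finset.mem_inter, Finset.mem_insert]
        constructor
        · rintro ⟨ha, h⟩
          rcases h with rfl | hb
          · exact Or.inl rfl
          · exact Or.inr ⟨ha, hb⟩
        · rintro (rfl | ⟨ha, hb⟩)
          · exact ⟨he, Or.inl rfl⟩
          · exact ⟨ha, Or.inr hb⟩
      simpa [h1] using w.marginal (X ∩ Y) e
    · have h1 : X ∩ insert e Y = X ∩ Y := by
        ext a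
        simp only [Finset.mem_inter, Finset.mem_insert]
        constructor
        · rintro ⟨ha, (rfl | hb)⟩
          · exact absurd ha he
          · exact ⟨ha, hb⟩
        · rintro ⟨ha, hb⟩; exact ⟨ha, Or.inr hb⟩
      simp only [h1]
      exact Nat.le_succ _

/-!
The bundle-size vectors of clean allocations form a set with the exchange property of
M♮-convex sets (by augmenting paths), and clean Lorenz dominating allocations are exactly the
Lorenz maximal points of that set. Restricting agent `i` to `X ⊆ Y` shrinks the set, and a point
of the larger set with coordinate `i` set to `0` lies in the smaller one.

A Lorenz maximal point admits no added unit and no Pigou–Dalton transfer (a unit moved from a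
coordinate to one at least two lower), so an exchange from it either swaps two coordinates
differing by one, which keeps Lorenz maximality, or takes the unit from a coordinate not above
the receiving one. Let `B` be Lorenz maximal for `X` with `B i` least, `A` Lorenz maximal for
`Y`, and suppose `A i < B i`. Chaining exchanges between `A` and `B` yields either a swap fixing
coordinate `i` (by the minimality of `B i`) that brings the pair closer in `ℓ¹`, or a coordinate
where `B` is strictly lower; this double descent cannot go on forever. The same descent, run
from a maximiser of the concave potential `∑ j, x j * (2 K - x j)`, shows that Lorenz maximal
points exist.
-/
namespace Matroidal

variable {m : ℕ} (w : Matroidal m)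

def Indep (S : Finset (Fin m)) : Prop := w.v S = S.card

theorem v_union_le (T U : Finset (Fin m)) : w.v (T ∪ U) ≤ w.v T + U.card := by
  classical
  induction U using Finset.induction_on with
  | empty => simp
  | insert a U ha ih =>
    have := w.marginal (T ∪ U) a
    rw [Finset.union_insert, Finset.card_insert_of_notMem ha]
    omega

theorem v_le_card (S : Finset (Fin m)) : w.v S ≤ S.card := by
  simpa [w.v_empty] using w.v_union_le ∅ S

variable {w}

theorem Indep.subset {S T : Finset (Fin m)} (hS : w.Indep S) (hTS : T ⊆ S) : w.Indep T := by
  have h := w.v_union_le T (S \ T)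
  rw [Finset.union_sdiff_of_subset hTS, hS, Finset.card_sdiff_of_subset hTS] at h
  have := Finset.card_le_card hTS
  have := w.v_le_card T
  unfold Indep
  omega

theorem v_eq_of_forall_v_insert_eq {T S : Finset (Fin m)} (hTS : T ⊆ S)
    (h : ∀ e ∈ S, w.v (insert e T) = w.v T) : w.v S = w.v T := by
  classical
  suffices ∀ U ⊆ S, w.v (T ∪ U) = w.v T by
    simpa [Finset.union_eq_right.mpr hTS] using this S le_rfl
  intro U
  induction U using Finset.induction_on with
  | empty => simp
  | insert a U _ ih =>
    intro hUS
    have hsub := w.submodular (T ∪ U) (insert a T)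
    have hunion : T ∪ U ∪ insert a T = T ∪ insert a U := by
      ext; simp only [Finset.mem_union, Finset.mem_insert]; tauto
    have hinter : w.v T ≤ w.v ((T ∪ U) ∩ insert a T) :=
      w.mono fun x hx => by simp [hx]
    have := w.mono (Finset.subset_union_left (s₂ := insert a U) (s₁ := T))
    rw [hunion, ih (Finset.insert_subset_iff.mp hUS).2, h a (hUS (Finset.mem_insert_self a U))]
      at hsub
    omega

theorem Indep.exists_insert {S T : Finset (Fin m)} (hS : w.Indep S) (hT : w.Indep T)
    (hlt : S.card < T.card) : ∃ e ∈ T, e ∉ S ∧ w.Indep (insert e S) := by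
  by_contra! hno
  have hspan : ∀ e ∈ S ∪ T, w.v (insert e S) = w.v S := by
    intro e he
    by_cases heS : e ∈ S
    · rw [Finset.insert_eq_of_mem heS]
    · have := hno e ((Finset.mem_union.mp he).resolve_left heS) heS
      have := w.marginal S e
      have := w.mono (Finset.subset_insert e S)
      unfold Indep at *
      rw [Finset.card_insert_of_notMem heS] at *
      omega
  have := v_eq_of_forall_v_insert_eq Finset.subset_union_left hspan
  have := w.mono (Finset.subset_union_right (s₁ := S) (s₂ := T))
  unfold Indep at hS hT
  omega

variable (w) in
theorem exists_indep_subset_card_eq (S : Finset (Fin m)) :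
    ∃ T ⊆ S, w.Indep T ∧ T.card = w.v S := by
  classical
  obtain ⟨T, hT, hmax⟩ := Finset.exists_max_image
    (S.powerset.filter w.Indep) Finset.card ⟨∅, by simp [Indep, w.v_empty]⟩
  rw [Finset.mem_filter, Finset.mem_powerset] at hT
  refine ⟨T, hT.1, hT.2, ?_⟩
  have hspan : ∀ e ∈ S, w.v (insert e T) = w.v T := by
    intro e heS
    by_cases heT : e ∈ T
    · rw [Finset.insert_eq_of_mem heT]
    · have hcard := hmax (insert e T)
      simp only [Finset.mem_filter, Finset.mem_powerset, Finset.insert_subset_iff] at hcard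
      rw [Finset.card_insert_of_notMem heT] at hcard
      have hTind : w.v T = T.card := hT.2
      have := w.marginal T e
      have := w.mono (Finset.subset_insert e T)
      by_contra hne
      have := hcard ⟨⟨heS, hT.1⟩, by
        unfold Indep; rw [Finset.card_insert_of_notMem heT]; omega⟩
      omega
  rw [v_eq_of_forall_v_insert_eq hT.1 hspan]
  exact hT.2.symm

theorem indep_restrict_iff {X S : Finset (Fin m)} :
    (w.restrict X).Indep S ↔ S ⊆ X ∧ w.Indep S := by
  change w.v (X ∩ S) = S.card ↔ _
  constructor
  · intro h
    have := w.v_le_card (X ∩ S)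
    have hXS : X ∩ S = S := Finset.eq_of_subset_of_card_le Finset.inter_subset_right (by omega)
    exact ⟨Finset.inter_eq_right.mp hXS, by rwa [hXS] at h⟩
  · rintro ⟨hSX, hS⟩
    rwa [Finset.inter_eq_right.mpr hSX]

end Matroidal

section Lorenz

variable {n : ℕ}

theorem kSmallestSum_le_sum (u : Fin n → ℕ) {S : Finset (Fin n)} {k : ℕ} (hS : S.card = k) :
    kSmallestSum u k ≤ ∑ i ∈ S, u i :=
  Nat.sInf_le ⟨S, hS, rfl⟩

theorem exists_kSmallestSum_eq_sum (u : Fin n → ℕ) {k : ℕ} (hk : k ≤ n) :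
    ∃ S : Finset (Fin n), S.card = k ∧ kSmallestSum u k = ∑ i ∈ S, u i := by
  obtain ⟨S, -, hS⟩ :=
    Finset.exists_subset_card_eq (s := (Finset.univ : Finset (Fin n))) (by simpa using hk)
  exact Nat.sInf_mem (s := {s | ∃ S : Finset (Fin n), S.card = k ∧ s = ∑ i ∈ S, u i})
    ⟨_, S, hS, rfl⟩

theorem kSmallestSum_mono {u u' : Fin n → ℕ} (h : u ≤ u') {k : ℕ} (hk : k ≤ n) :
    kSmallestSum u k ≤ kSmallestSum u' k := by
  obtain ⟨S, hS, hsum⟩ := exists_kSmallestSum_eq_sum u' hk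
  exact hsum ▸ (kSmallestSum_le_sum u hS).trans (Finset.sum_le_sum fun i _ => h i)

theorem kSmallestSum_n_eq_sum (u : Fin n → ℕ) : kSmallestSum u n = ∑ i, u i := by
  obtain ⟨S, hS, hsum⟩ := exists_kSmallestSum_eq_sum u le_rfl
  rwa [Finset.eq_univ_of_card S (by simpa using hS)] at hsum

theorem kSmallestSum_comp_perm (u : Fin n → ℕ) (σ : Equiv.Perm (Fin n)) (k : ℕ) :
    kSmallestSum (u ∘ σ) k = kSmallestSum u k := by
  unfold kSmallestSum
  congr 1
  ext s
  constructor
  · rintro ⟨S, hS, rfl⟩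
    exact ⟨S.map σ.toEmbedding, by simpa using hS, by simp [Finset.sum_map]⟩
  · rintro ⟨S, hS, rfl⟩
    exact ⟨S.map σ.symm.toEmbedding, by simpa using hS, by simp [Finset.sum_map]⟩

def transfer (u : Fin n → ℕ) (t l : Fin n) : Fin n → ℕ := u + Pi.single t 1 - Pi.single l 1

theorem single_le_add_single {u : Fin n → ℕ} {l : Fin n} (hl : 1 ≤ u l) (t : Fin n) :
    Pi.single l 1 ≤ u + Pi.single t 1 := by
  intro r
  by_cases hr : r = l
  · subst hr; simp; omega
  · simp [hr]

theorem sum_transfer_add {u : Fin n → ℕ} {t l : Fin n} (hl : 1 ≤ u l) (S : Finset (Fin n)) :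
    ∑ i ∈ S, transfer u t l i + (if l ∈ S then 1 else 0) =
      ∑ i ∈ S, u i + (if t ∈ S then 1 else 0) := by
  have h := Finset.sum_congr rfl fun r (_ : r ∈ S) =>
    tsub_add_cancel_of_le (single_le_add_single hl t r)
  simpa only [transfer, Pi.add_apply, Pi.sub_apply, Finset.sum_add_distrib,
    Finset.sum_pi_single'] using h

theorem kSmallestSum_le_transfer {u : Fin n → ℕ} {t l : Fin n} (h : u t + 2 ≤ u l) {k : ℕ}
    (hk : k ≤ n) : kSmallestSum u k ≤ kSmallestSum (transfer u t l) k := by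
  obtain ⟨S, hS, hsum⟩ := exists_kSmallestSum_eq_sum (transfer u t l) hk
  have htransfer := sum_transfer_add (t := t) (show 1 ≤ u l by omega) S
  rw [hsum]
  by_cases hS' : l ∈ S ∧ t ∉ S
  · have htS : t ∉ S.erase l := fun h => hS'.2 (Finset.mem_of_mem_erase h)
    have hcard : (insert t (S.erase l)).card = k := by
      rw [Finset.card_insert_of_notMem htS, Finset.card_erase_of_mem hS'.1, ← hS,
        Nat.sub_add_cancel (Finset.card_pos.mpr ⟨l, hS'.1⟩)]
    have hle := kSmallestSum_le_sum u hcard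
    rw [Finset.sum_insert htS] at hle
    have := Finset.sum_erase_add S u hS'.1
    rw [if_pos hS'.1, if_neg hS'.2] at htransfer
    omega
  · refine (kSmallestSum_le_sum u hS).trans ?_
    rw [not_and_or, not_not] at hS'
    split_ifs at htransfer <;> simp_all

theorem sum_add_card_sdiff_le_sum {w : Fin n → ℕ} {c : ℕ} {F S : Finset (Fin n)}
    (hcard : S.card = F.card) (hF : ∀ x ∈ F, w x ≤ c) (hF' : ∀ x ∉ F, c < w x) :
    ∑ i ∈ F, w i + (S \ F).card ≤ ∑ i ∈ S, w i := by
  have hsplitS := Finset.sum_inter_add_sum_sdiff S F w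
  have hsplitF := Finset.sum_inter_add_sum_sdiff F S w
  have hlow : ∑ x ∈ F \ S, w x ≤ (F \ S).card • c :=
    Finset.sum_le_card_nsmul _ _ _ fun x hx => hF x (Finset.mem_sdiff.mp hx).1
  have hhigh : (S \ F).card • (c + 1) ≤ ∑ x ∈ S \ F, w x :=
    Finset.card_nsmul_le_sum _ _ _ fun x hx => hF' x (Finset.mem_sdiff.mp hx).2
  rw [Finset.inter_comm] at hsplitF
  rw [smul_eq_mul, Finset.card_sdiff_comm hcard.symm] at hlow
  rw [smul_eq_mul, Nat.mul_succ] at hhigh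
  omega

theorem exists_kSmallestSum_lt_transfer {u : Fin n → ℕ} {t l : Fin n} (h : u t + 2 ≤ u l) :
    ∃ k ≤ n, kSmallestSum u k < kSmallestSum (transfer u t l) k := by
  set F := Finset.univ.filter fun j => u j ≤ u t
  have hFn : F.card ≤ n := (Finset.card_le_univ F).trans (by simp)
  have htF : t ∈ F := by simp [F]
  have hlF : l ∉ F := by
    simp only [F, Finset.mem_filter, Finset.mem_univ, true_and, not_le]
    omega
  have hFl : ∀ x ∈ F, x ≠ l := fun x hx h => hlF (h ▸ hx)
  refine ⟨F.card, hFn, ?_⟩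
  -- every `#F`-subset sum of the transfer exceeds the sum of `u` over the threshold set `F`
  obtain ⟨S, hS, hsum⟩ := exists_kSmallestSum_eq_sum (transfer u t l) hFn
  set w := u - Pi.single l 1
  have htransfer : ∑ i ∈ S, transfer u t l i = ∑ i ∈ S, w i + if t ∈ S then 1 else 0 := by
    have : transfer u t l = w + Pi.single t 1 := by
      funext r
      simp only [transfer, w, Pi.add_apply, Pi.sub_apply, Pi.single_apply]
      split_ifs <;> subst_vars <;> omega
    simp only [this, Pi.add_apply, Finset.sum_add_distrib, Finset.sum_pi_single']
  have hthreshold := sum_add_card_sdiff_le_sum (w := w) (c := u t) hS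
    (fun x hx => by simp [w, hFl x hx, (Finset.mem_filter.mp hx).2])
    (fun x hx => by
      simp only [F, Finset.mem_filter, Finset.mem_univ, true_and, not_le] at hx
      simp only [w, Pi.sub_apply, Pi.single_apply]
      split_ifs <;> subst_vars <;> omega)
  have hFw : ∑ i ∈ F, w i = ∑ i ∈ F, u i :=
    Finset.sum_congr rfl fun x hx => by
      simp [w, hFl x hx]
  have hle := kSmallestSum_le_sum u (rfl : F.card = F.card)
  rw [hsum]
  by_cases htS : t ∈ S
  · rw [if_pos htS] at htransfer
    omega
  · have : 1 ≤ (S \ F).card := by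
      rw [Finset.card_sdiff_comm hS]
      exact Finset.card_pos.mpr ⟨t, Finset.mem_sdiff.mpr ⟨htF, htS⟩⟩
    rw [if_neg htS] at htransfer
    omega

theorem transfer_eq_comp_swap {u : Fin n → ℕ} {t l : Fin n} (h : u l = u t + 1) :
    transfer u t l = u ∘ Equiv.swap t l := by
  have htl : t ≠ l := by rintro rfl; omega
  funext r
  by_cases hrt : r = t
  · subst hrt; simp [transfer, htl, h]
  · by_cases hrl : r = l
    · subst hrl; simp [transfer, htl.symm, h]
    · simp [transfer, hrt, hrl, Equiv.swap_apply_of_ne_of_ne]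

def LorenzLE (y x : Fin n → ℕ) : Prop :=
  ∀ k ≤ n, kSmallestSum y k ≤ kSmallestSum x k

theorem LorenzLE.rfl {x : Fin n → ℕ} : LorenzLE x x :=
  fun _ _ => le_rfl

theorem LorenzLE.trans {x y z : Fin n → ℕ} (hxy : LorenzLE x y) (hyz : LorenzLE y z) :
    LorenzLE x z :=
  fun k hk => (hxy k hk).trans (hyz k hk)

theorem LorenzLE.of_le {x y : Fin n → ℕ} (h : x ≤ y) : LorenzLE x y :=
  fun _ hk => kSmallestSum_mono h hk

theorem lorenzLE_comp_perm (u : Fin n → ℕ) (σ : Equiv.Perm (Fin n)) : LorenzLE (u ∘ σ) u :=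
  fun k _ => (kSmallestSum_comp_perm u σ k).le

def IsLorenzMax (S : Set (Fin n → ℕ)) (x : Fin n → ℕ) : Prop :=
  x ∈ S ∧ ∀ y ∈ S, LorenzLE y x

namespace IsLorenzMax

variable {S : Set (Fin n → ℕ)} {x : Fin n → ℕ}

theorem add_single_notMem (hx : IsLorenzMax S x) (j : Fin n) : x + Pi.single j 1 ∉ S := by
  intro hmem
  have := hx.2 _ hmem n le_rfl
  simp [kSmallestSum_n_eq_sum, Finset.sum_add_distrib] at this

theorem le_add_one_of_transfer_mem (hx : IsLorenzMax S x) {t l : Fin n}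
    (hmem : transfer x t l ∈ S) : x l ≤ x t + 1 := by
  by_contra! hlt
  obtain ⟨k, hk, hlt⟩ := exists_kSmallestSum_lt_transfer (show x t + 2 ≤ x l by omega)
  exact (hx.2 _ hmem k hk).not_gt hlt

theorem transfer (hx : IsLorenzMax S x) {t l : Fin n} (h : x l = x t + 1)
    (hmem : transfer x t l ∈ S) : IsLorenzMax S (transfer x t l) := by
  refine ⟨hmem, fun y hy k hk => ?_⟩
  rw [transfer_eq_comp_swap h, kSmallestSum_comp_perm]
  exact hx.2 y hy k hk

end IsLorenzMax

/-- The exchange axiom of M♮-convex sets, in the one-sided form satisfied by the bundle sizes of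
clean allocations. -/
def HasExchange (S : Set (Fin n → ℕ)) : Prop :=
  ∀ x ∈ S, ∀ y ∈ S, ∀ j, x j < y j →
    x + Pi.single j 1 ∈ S ∨ ∃ l, y l < x l ∧ transfer x j l ∈ S

def l1Dist (x y : Fin n → ℕ) : ℕ :=
  ∑ j, (x j - y j + (y j - x j))

theorem l1Dist_comm (x y : Fin n → ℕ) : l1Dist x y = l1Dist y x :=
  Finset.sum_congr rfl fun _ _ => Nat.add_comm _ _

theorem l1Dist_add_single_lt {x y : Fin n → ℕ} {j : Fin n} (h : y j < x j) :
    l1Dist x (y + Pi.single j 1) < l1Dist x y := by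
  refine Finset.sum_lt_sum (fun r _ => ?_) ⟨j, Finset.mem_univ j, by simp; omega⟩
  by_cases hr : r = j
  · subst hr; simp; omega
  · simp [hr]

theorem l1Dist_transfer_lt {x y : Fin n → ℕ} {t l : Fin n} (ht : y t < x t) (hl : x l < y l) :
    l1Dist x (transfer y t l) < l1Dist x y := by
  have htl : t ≠ l := by rintro rfl; omega
  refine Finset.sum_lt_sum (fun r _ => ?_)
    ⟨t, Finset.mem_univ t, by simp [transfer, htl]; omega⟩
  simp only [transfer, Pi.add_apply, Pi.sub_apply, Pi.single_apply]
  split_ifs <;> subst_vars <;> omega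

def concavePotential (K : ℕ) (x : Fin n → ℕ) : ℤ :=
  ∑ j, (x j : ℤ) * (2 * K - x j)

theorem concavePotential_add_single (K : ℕ) (x : Fin n → ℕ) (j : Fin n) :
    concavePotential K (x + Pi.single j 1) =
      concavePotential K x + (2 * K - 2 * x j - 1) := by
  rw [← sub_eq_iff_eq_add', concavePotential, concavePotential, ← Finset.sum_sub_distrib]
  have hpoint : ∀ r, (((x + Pi.single j 1 : Fin n → ℕ) r : ℕ) : ℤ) *
      (2 * K - (x + Pi.single j 1 : Fin n → ℕ) r) - x r * (2 * K - x r) =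
      (Pi.single j (2 * (K : ℤ) - 2 * x j - 1) : Fin n → ℤ) r := by
    intro r
    by_cases hr : r = j
    · subst hr; simp; ring
    · simp [hr]
  simp only [hpoint, Finset.sum_pi_single', Finset.mem_univ, if_true]

theorem concavePotential_transfer (K : ℕ) {x : Fin n → ℕ} {t l : Fin n} (htl : t ≠ l)
    (hl : 1 ≤ x l) :
    concavePotential K (transfer x t l) = concavePotential K x + 2 * (x l - x t - 1) := by
  rw [← sub_eq_iff_eq_add', concavePotential, concavePotential, ← Finset.sum_sub_distrib]
  have hpoint : ∀ r, ((transfer x t l r : ℕ) : ℤ) * (2 * K - transfer x t l r) -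
      x r * (2 * K - x r) = (Pi.single t (2 * (K : ℤ) - 2 * x t - 1) : Fin n → ℤ) r +
        (Pi.single l (2 * (x l : ℤ) - 2 * K - 1) : Fin n → ℤ) r := by
    intro r
    by_cases hrt : r = t
    · subst hrt; simp [transfer, htl]; ring
    · by_cases hrl : r = l
      · subst hrl; simp [transfer, hrt, Nat.cast_sub hl]; ring
      · simp [transfer, hrt, hrl]
  simp only [hpoint, Finset.sum_add_distrib, Finset.sum_pi_single', Finset.mem_univ, if_true]
  ring

variable {S : Set (Fin n → ℕ)} {K : ℕ}

theorem HasExchange.exists_closer_or_lower (hS : HasExchange S) (hK : ∀ z ∈ S, ∀ j, z j ≤ K)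
    {x y : Fin n → ℕ} (hx : x ∈ S) (hmax : IsMaxOn (concavePotential K) S x) (hy : y ∈ S)
    {t : Fin n} (ht : x t < y t) :
    (∃ x' y', x' ∈ S ∧ IsMaxOn (concavePotential K) S x' ∧ y' ∈ S ∧ LorenzLE x' x ∧
      LorenzLE y y' ∧ l1Dist x' y' < l1Dist x y) ∨ ∃ t', x t' < y t' ∧ x t' < x t := by
  rw [isMaxOn_iff] at hmax
  rcases hS x hx y hy t ht with hadd | ⟨l, hl, hmem⟩
  · have hgain := hmax _ hadd
    have := hK y hy t
    rw [concavePotential_add_single] at hgain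
    omega
  have htl : t ≠ l := by rintro rfl; omega
  have hgain := hmax _ hmem
  rw [concavePotential_transfer K htl (by omega)] at hgain
  by_cases hswap : x l = x t + 1
  · refine .inl ⟨transfer x t l, y, hmem, isMaxOn_iff.mpr fun z hz => ?_, hy, ?_, .rfl,
      by rw [l1Dist_comm, l1Dist_comm x]; exact l1Dist_transfer_lt ht hl⟩
    · rw [concavePotential_transfer K htl (by omega), hswap]
      push_cast
      linarith [hmax z hz]
    · rw [transfer_eq_comp_swap hswap]
      exact lorenzLE_comp_perm x _
  rcases hS y hy x hx l hl with hadd' | ⟨t', ht', hmem'⟩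
  · exact .inl ⟨x, _, hx, isMaxOn_iff.mpr hmax, hadd', .rfl, .of_le le_self_add,
      l1Dist_add_single_lt hl⟩
  by_cases hPD : y l + 2 ≤ y t'
  · exact .inl ⟨x, _, hx, isMaxOn_iff.mpr hmax, hmem', .rfl,
      fun k hk => kSmallestSum_le_transfer hPD hk, l1Dist_transfer_lt hl ht'⟩
  · exact .inr ⟨t', ht', by omega⟩

theorem HasExchange.lorenzLE_of_isMaxOn (hS : HasExchange S) (hK : ∀ z ∈ S, ∀ j, z j ≤ K)
    {x y : Fin n → ℕ} (hx : x ∈ S) (hmax : IsMaxOn (concavePotential K) S x) (hy : y ∈ S) :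
    LorenzLE y x := by
  induction hd : l1Dist x y using Nat.strong_induction_on generalizing x y with
  | _ d IH =>
  by_cases hyx : y ≤ x
  · exact .of_le hyx
  obtain ⟨t, ht⟩ : ∃ t, x t < y t := by simpa [Pi.le_def] using hyx
  induction hL : x t using Nat.strong_induction_on generalizing t with
  | _ L IHL =>
  rcases hS.exists_closer_or_lower hK hx hmax hy ht with
    ⟨x', y', hx', hmax', hy', hxx', hyy', hlt⟩ | ⟨t', ht', hlt⟩
  · exact hyy'.trans ((IH _ (hd ▸ hlt) hx' hmax' hy' rfl).trans hxx')
  · exact IHL _ (hL ▸ hlt) t' ht' rfl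

theorem HasExchange.exists_isLorenzMax (hS : HasExchange S) (hK : ∀ z ∈ S, ∀ j, z j ≤ K)
    (hne : S.Nonempty) : ∃ x, IsLorenzMax S x := by
  have hfin : S.Finite := (Set.Finite.pi fun _ => Set.finite_Iic K).subset
    fun x hx => Set.mem_univ_pi.mpr (hK x hx)
  obtain ⟨x, hx, hmax⟩ := S.exists_max_image (concavePotential K) hfin hne
  exact ⟨x, hx, fun y hy => hS.lorenzLE_of_isMaxOn hK hx (isMaxOn_iff.mpr hmax) hy⟩

variable {S' : Set (Fin n → ℕ)} {i : Fin n}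

theorem HasExchange.exists_closer_or_lower_of_subset (hS : HasExchange S) (hS' : HasExchange S')
    (hsub : S ⊆ S') (hzero : ∀ y ∈ S', Function.update y i 0 ∈ S) {A B : Fin n → ℕ}
    (hA : IsLorenzMax S' A) (hB : IsLorenzMax S B) (hBmin : ∀ C, IsLorenzMax S C → B i ≤ C i)
    (hAB : A i < B i) {t : Fin n} (ht : B t < A t) (htA : B t ≤ A i) :
    (∃ A' B', IsLorenzMax S' A' ∧ IsLorenzMax S B' ∧ A' i = A i ∧ B' i = B i ∧
      l1Dist A' B' < l1Dist A B) ∨ ∃ t', B t' < A t' ∧ B t' < B t := by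
  have hti : t ≠ i := by rintro rfl; omega
  -- `A` need not lie in `S`, but emptying its coordinate `i` puts it there
  rcases hS B hB.1 _ (hzero A hA.1) t (by rwa [Function.update_of_ne hti]) with
    hadd | ⟨l, hl, hmem⟩
  · exact absurd hadd (hB.add_single_notMem t)
  have hBl := hB.le_add_one_of_transfer_mem hmem
  by_cases hli : l = i
  · subst hli
    have hswap : B l = B t + 1 := by omega
    have := hBmin _ (hB.transfer hswap hmem)
    simp [transfer, hti] at this
    omega
  rw [Function.update_of_ne hli] at hl
  by_cases hswap : B l = B t + 1
  · exact .inl ⟨A, _, hA, hB.transfer hswap hmem, rfl, by simp [transfer, hti.symm, Ne.symm hli],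
      l1Dist_transfer_lt ht hl⟩
  rcases hS' A hA.1 B (hsub hB.1) l hl with hadd | ⟨t', ht', hmem'⟩
  · exact absurd hadd (hA.add_single_notMem l)
  have hAt' := hA.le_add_one_of_transfer_mem hmem'
  have ht'i : t' ≠ i := by rintro rfl; omega
  by_cases hswap' : A t' = A l + 1
  · refine .inl ⟨_, B, hA.transfer hswap' hmem', hB,
      by simp [transfer, Ne.symm hli, ht'i.symm], rfl, ?_⟩
    rw [l1Dist_comm, l1Dist_comm A]
    exact l1Dist_transfer_lt hl ht'
  · exact .inr ⟨t', ht', by omega⟩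

theorem HasExchange.le_of_isLorenzMax_of_subset (hS : HasExchange S) (hS' : HasExchange S')
    (hsub : S ⊆ S') (hzero : ∀ y ∈ S', Function.update y i 0 ∈ S) {A B : Fin n → ℕ}
    (hB : IsLorenzMax S B) (hBmin : ∀ C, IsLorenzMax S C → B i ≤ C i)
    (hA : IsLorenzMax S' A) : B i ≤ A i := by
  by_contra! hAB
  induction hd : l1Dist A B using Nat.strong_induction_on generalizing A B with
  | _ d IH =>
  rcases hS' A hA.1 B (hsub hB.1) i hAB with hadd | ⟨t, ht, hmem⟩
  · exact hA.add_single_notMem i hadd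
  have htA : B t ≤ A i := by have := hA.le_add_one_of_transfer_mem hmem; omega
  clear hmem
  induction hL : B t using Nat.strong_induction_on generalizing t with
  | _ L IHL =>
  rcases hS.exists_closer_or_lower_of_subset hS' hsub hzero hA hB hBmin hAB ht htA with
    ⟨A', B', hA', hB', hAi, hBi, hlt⟩ | ⟨t', ht', hlt⟩
  · exact IH _ (hd ▸ hlt) hB' (hBi ▸ hBmin) hA' (by omega) rfl
  · exact IHL _ (hL ▸ hlt) t' ht' (by omega) rfl

theorem HasExchange.sInf_le_sInf_of_subset (hS : HasExchange S) (hS' : HasExchange S')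
    (hsub : S ⊆ S') (hzero : ∀ y ∈ S', Function.update y i 0 ∈ S)
    (hne : ∃ x, IsLorenzMax S' x) :
    sInf {c | ∃ x, IsLorenzMax S x ∧ x i = c} ≤
      sInf {c | ∃ x, IsLorenzMax S' x ∧ x i = c} := by
  obtain ⟨A₀, hA₀⟩ := hne
  obtain ⟨A, hA, hAi⟩ := Nat.sInf_mem (s := {c | ∃ x, IsLorenzMax S' x ∧ x i = c})
    ⟨_, A₀, hA₀, rfl⟩
  rcases Set.eq_empty_or_nonempty {c | ∃ x, IsLorenzMax S x ∧ x i = c} with h | h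
  · rw [h, Nat.sInf_empty]
    exact Nat.zero_le _
  obtain ⟨B, hB, hBi⟩ := Nat.sInf_mem h
  rw [← hAi, ← hBi]
  exact hS.le_of_isLorenzMax_of_subset hS' hsub hzero hB
    (fun C hC => hBi ▸ Nat.sInf_le ⟨C, hC, rfl⟩) hA

end Lorenz

section Allocations

variable {n m : ℕ} {Q Q' : Fin n → Matroidal m}

theorem transfer_add_single {x : Fin n → ℕ} {l : Fin n} (hl : 1 ≤ x l) (j : Fin n) :
    transfer x j l + Pi.single l 1 = x + Pi.single j 1 :=
  tsub_add_cancel_of_le (single_le_add_single hl j)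

theorem transfer_transfer {x : Fin n → ℕ} {l : Fin n} (hl : 1 ≤ x l) (j l₂ : Fin n) :
    transfer (transfer x j l) l l₂ = transfer x j l₂ := by
  rw [transfer, transfer_add_single hl]
  rfl

def cleanSizes (Q : Fin n → Matroidal m) : Set (Fin n → ℕ) :=
  {x | ∃ C, IsAllocation C ∧ Clean Q C ∧ Finset.card ∘ C = x}

def moveGood (C : Fin n → Finset (Fin m)) (j : Fin n) (e : Fin m) : Fin n → Finset (Fin m) :=
  Function.update (fun r => (C r).erase e) j (insert e (C j))

variable {C D : Fin n → Finset (Fin m)} {j l : Fin n} {e : Fin m}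

theorem moveGood_of_ne {r : Fin n} (hr : r ≠ j) : moveGood C j e r = (C r).erase e :=
  Function.update_of_ne hr _ _

theorem isAllocation_moveGood (hC : IsAllocation C) (j : Fin n) (e : Fin m) :
    IsAllocation (moveGood C j e) := by
  have hsub : ∀ r, moveGood C j e r ⊆ insert e (C r) := by
    intro r
    by_cases hr : r = j
    · subst hr; simp [moveGood]
    · rw [moveGood_of_ne hr]
      exact (Finset.erase_subset e _).trans (Finset.subset_insert e _)
  have hdisj : ∀ a b, a ≠ b → b ≠ j → Disjoint (moveGood C j e a) (moveGood C j e b) := by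
    intro a b hab hb
    rw [moveGood_of_ne hb]
    refine Finset.disjoint_of_subset_left (hsub a) (Finset.disjoint_insert_left.mpr
      ⟨Finset.notMem_erase e _, (hC a b hab).mono_right (Finset.erase_subset e _)⟩)
  intro a b hab
  by_cases hb : b = j
  · exact (hdisj b a hab.symm (hb ▸ hab)).symm
  · exact hdisj a b hab hb

theorem clean_moveGood (hC : Clean Q C) (hins : (Q j).Indep (insert e (C j))) :
    Clean Q (moveGood C j e) := by
  intro r
  by_cases hr : r = j
  · subst hr
    rw [moveGood, Function.update_self]
    exact hins
  · rw [moveGood_of_ne hr]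
    exact Matroidal.Indep.subset (hC r) (Finset.erase_subset e _)

theorem card_comp_moveGood_of_forall_notMem (he : ∀ r, e ∉ C r) :
    Finset.card ∘ moveGood C j e = Finset.card ∘ C + Pi.single j 1 := by
  funext r
  by_cases hr : r = j
  · subst hr; simp [moveGood, Finset.card_insert_of_notMem (he r)]
  · simp [moveGood_of_ne hr, hr, Finset.erase_eq_of_notMem (he r)]

theorem card_comp_moveGood_of_mem (hC : IsAllocation C) (hl : e ∈ C l) (hlj : l ≠ j) :
    Finset.card ∘ moveGood C j e = transfer (Finset.card ∘ C) j l := by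
  have he : ∀ r ≠ l, e ∉ C r := fun r hrl her =>
    Finset.disjoint_left.mp (hC l r hrl.symm) hl her
  funext r
  by_cases hrj : r = j
  · subst hrj; simp [moveGood, transfer, hlj, Finset.card_insert_of_notMem (he r hlj.symm)]
  · by_cases hrl : r = l
    · subst hrl; simp [moveGood_of_ne hrj, transfer, hrj, Finset.card_erase_of_mem hl]
    · simp [moveGood_of_ne hrj, transfer, hrj, hrl, Finset.erase_eq_of_notMem (he r hrl)]

theorem sum_card_sdiff_moveGood_lt (hD : IsAllocation D) (heD : e ∈ D j) (heC : e ∉ C j) :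
    ∑ r, (D r \ moveGood C j e r).card < ∑ r, (D r \ C r).card := by
  refine Finset.sum_lt_sum (fun r _ => Finset.card_le_card ?_)
    ⟨j, Finset.mem_univ j, Finset.card_lt_card ?_⟩
  · by_cases hr : r = j
    · subst hr
      simpa [moveGood] using Finset.sdiff_subset_sdiff le_rfl (Finset.subset_insert e _)
    · intro x hx
      rw [moveGood_of_ne hr, Finset.mem_sdiff, Finset.mem_erase] at hx
      have hxe : x ≠ e := fun h => Finset.disjoint_left.mp (hD j r (Ne.symm hr)) heD (h ▸ hx.1)
      exact Finset.mem_sdiff.mpr ⟨hx.1, fun hxC => hx.2 ⟨hxe, hxC⟩⟩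
  · simp only [moveGood, Function.update_self]
    refine Finset.ssubset_iff_of_subset (Finset.sdiff_subset_sdiff le_rfl
      (Finset.subset_insert e _)) |>.mpr ⟨e, by simp [heD, heC], by simp⟩

theorem exists_augment (hC : IsAllocation C) (hCc : Clean Q C) (hD : IsAllocation D)
    (hDc : Clean Q D) (hj : (C j).card < (D j).card) :
    Finset.card ∘ C + Pi.single j 1 ∈ cleanSizes Q ∨
      ∃ l, (D l).card < (C l).card ∧ transfer (Finset.card ∘ C) j l ∈ cleanSizes Q := by
  induction hd : ∑ r, (D r \ C r).card using Nat.strong_induction_on generalizing C j with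
  | _ d IH =>
  obtain ⟨e, heD, heC, hins⟩ := Matroidal.Indep.exists_insert (hCc j) (hDc j) hj
  have hC' := isAllocation_moveGood hC j e
  have hCc' := clean_moveGood hCc hins
  by_cases hfree : ∀ r, e ∉ C r
  · exact .inl ⟨_, hC', hCc', card_comp_moveGood_of_forall_notMem hfree⟩
  obtain ⟨l, hl⟩ := not_forall_not.mp hfree
  have hlj : l ≠ j := by rintro rfl; exact heC hl
  have hsizes := card_comp_moveGood_of_mem hC hl hlj
  by_cases hDl : (D l).card < (C l).card
  · exact .inr ⟨l, hDl, _, hC', hCc', hsizes⟩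
  -- the good taken from `l` leaves `l` short of `D l`: continue augmenting at `l`
  have hCl : 1 ≤ (C l).card := Finset.card_pos.mpr ⟨e, hl⟩
  have hsize : ∀ r, (moveGood C j e r).card = transfer (Finset.card ∘ C) j l r :=
    congrFun hsizes
  have hl' : (moveGood C j e l).card < (D l).card := by
    have := hsize l
    simp [transfer, hlj] at this
    omega
  rcases IH _ (hd ▸ sum_card_sdiff_moveGood_lt hD heD heC) hC' hCc' hl' rfl with
    h | ⟨l₂, hl₂, h⟩
  · rw [hsizes, transfer_add_single hCl] at h
    exact .inl h
  · have hl₂l : l₂ ≠ l := by rintro rfl; omega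
    have hl₂j : l₂ ≠ j := by
      rintro rfl
      have := hsize l₂
      simp [transfer, hlj.symm] at this
      omega
    have hl₂size := hsize l₂
    simp [transfer, hl₂j, hl₂l] at hl₂size
    rw [hsizes, transfer_transfer hCl] at h
    exact .inr ⟨l₂, hl₂size ▸ hl₂, h⟩

theorem hasExchange_cleanSizes (Q : Fin n → Matroidal m) : HasExchange (cleanSizes Q) := by
  rintro _ ⟨C, hC, hCc, rfl⟩ _ ⟨D, hD, hDc, rfl⟩ j hj
  exact exists_augment hC hCc hD hDc hj

theorem exists_isLorenzMax_cleanSizes (Q : Fin n → Matroidal m) :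
    ∃ x, IsLorenzMax (cleanSizes Q) x := by
  refine (hasExchange_cleanSizes Q).exists_isLorenzMax (K := m) ?_
    ⟨_, fun _ => ∅, fun _ _ _ => Finset.disjoint_empty_left _, fun j => (Q j).v_empty, rfl⟩
  rintro _ ⟨C, -, -, rfl⟩ j
  simpa using Finset.card_le_univ (C j)

theorem cleanSizes_mono (h : ∀ j S, (Q j).Indep S → (Q' j).Indep S) :
    cleanSizes Q ⊆ cleanSizes Q' := by
  rintro _ ⟨C, hC, hCc, rfl⟩
  exact ⟨C, hC, fun j => h j _ (hCc j), rfl⟩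

theorem update_zero_mem_cleanSizes {i : Fin n} (h : ∀ j ≠ i, Q j = Q' j) {y : Fin n → ℕ}
    (hy : y ∈ cleanSizes Q') : Function.update y i 0 ∈ cleanSizes Q := by
  obtain ⟨C, hC, hCc, rfl⟩ := hy
  have hsub : ∀ r, Function.update C i ∅ r ⊆ C r := by
    intro r
    by_cases hr : r = i
    · subst hr; simp
    · rw [Function.update_of_ne hr]
  refine ⟨Function.update C i ∅, fun a b hab => (hC a b hab).mono (hsub a) (hsub b),
    fun r => ?_, by rw [Function.comp_update]; rfl⟩
  by_cases hr : r = i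
  · subst hr; simp [(Q r).v_empty]
  · rw [Function.update_of_ne hr, h r hr]
    exact hCc r

theorem valuation_mem_cleanSizes (Q : Fin n → Matroidal m) {B : Fin n → Finset (Fin m)}
    (hB : IsAllocation B) : (fun j => (Q j).v (B j)) ∈ cleanSizes Q := by
  choose T hTB hT hTcard using fun j => (Q j).exists_indep_subset_card_eq (B j)
  exact ⟨T, fun a b hab => (hB a b hab).mono (hTB a) (hTB b), hT, funext hTcard⟩

theorem mem_cLD_iff {A : Fin n → Finset (Fin m)} (hA : IsAllocation A) (hAc : Clean Q A) :
    A ∈ cLD Q ↔ IsLorenzMax (cleanSizes Q) (Finset.card ∘ A) := by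
  have hval : ∀ {C}, Clean Q C → (fun j => (Q j).v (C j)) = Finset.card ∘ C := funext
  constructor
  · rintro ⟨-, -, hLD⟩
    refine ⟨⟨A, hA, hAc, rfl⟩, ?_⟩
    rintro _ ⟨C, hC, hCc, rfl⟩
    have := hLD C hC
    rwa [hval hCc, hval hAc] at this
  · intro hmax
    refine ⟨hAc, hA, fun B hB => ?_⟩
    rw [hval hAc]
    exact hmax.2 _ (valuation_mem_cleanSizes Q hB)

theorem minSize_eq_sInf (Q : Fin n → Matroidal m) (i : Fin n) :
    minSize Q i = sInf {c | ∃ x, IsLorenzMax (cleanSizes Q) x ∧ x i = c} := by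
  unfold minSize
  congr 1
  ext c
  constructor
  · rintro ⟨A, hA, rfl⟩
    exact ⟨_, (mem_cLD_iff hA.2.1 hA.1).mp hA, rfl⟩
  · rintro ⟨_, hx, rfl⟩
    obtain ⟨C, hC, hCc, rfl⟩ := hx.1
    exact ⟨C, (mem_cLD_iff hC hCc).mpr hx, rfl⟩

end Allocations

/-- Lemma 3.10: the minimum size of agent `i`'s bundle over clean Lorenz dominating
allocations is monotone with respect to restricting `i`'s valuation. -/
theorem minSize_monotone_restrict {n m : ℕ} (v : Fin n → Matroidal m) (i : Fin n)
    (X Y : Finset (Fin m)) (hXY : X ⊆ Y) :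
    minSize (Function.update v i ((v i).restrict X)) i ≤
      minSize (Function.update v i ((v i).restrict Y)) i := by
  rw [minSize_eq_sInf, minSize_eq_sInf]
  refine (hasExchange_cleanSizes _).sInf_le_sInf_of_subset (hasExchange_cleanSizes _)
    (cleanSizes_mono fun j S hS => ?_) (fun y => update_zero_mem_cleanSizes fun j hj => ?_)
    (exists_isLorenzMax_cleanSizes _)
  · by_cases hj : j = i
    · subst hj
      rw [Function.update_self, Matroidal.indep_restrict_iff] at hS ⊢
      exact ⟨hS.1.trans hXY, hS.2⟩
    · rwa [Function.update_of_ne hj] at hS ⊢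
  · rw [Function.update_of_ne hj, Function.update_of_ne hj]
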